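/- arXiv:2406.19805 — 3 statements merged into one kernel-verified Lean document; each statement's English description precedes it below -/
import Mathlib

section
/- Let a ≥ 0, β ∈ ℝ, r > 0, θ ∈ (θ₀, π/2) with tan θ₀ ≥ |β|/√2, and let λ ∈ cl(Σ_{θ,r}). Then neither root z₁(λ), z₂(λ) of (λ − z)(λ + a − z) + (β²/2)(z² − az) = 0 lies on the nonpositive real axis ℝ₋ ∪ {0}. That is, there is no α ∈ ℝ with (λ + α²)(λ + a + α²) + (β²/2)(α⁴ + aα²) = 0 for λ in the closed truncated sector. -/
/-!
With `t = α² ≥ 0` the equation reads `λ² + (2t + a)λ + (1 + β²/2)(t² + at) = 0`. A root has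
`Re λ ≤ 0`, and it is either real or has `Re λ = -(2t + a)/2`, `(Im λ)² = (β²/2)(t² + at) - a²/4`;
in both cases `(Im λ)² ≤ (β²/2)(Re λ)²`. A point of the closed sector with `Re λ ≤ 0` satisfies
`(Im λ)² ≥ tan²θ (Re λ)²`, and `tan²θ > tan²θ₀ ≥ β²/2`. Hence `λ = 0`, but `|λ| ≥ r > 0`.
-/

open Real

lemma Complex.neg_norm_mul_cos_le_re {θ : ℝ} (hθ : 0 ≤ θ) {z : ℂ} (hz : |z.arg| ≤ π - θ) :
    -(‖z‖ * Real.cos θ) ≤ z.re := by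
  have hcos : Real.cos (π - θ) ≤ Real.cos |z.arg| :=
    Real.cos_le_cos_of_nonneg_of_le_pi (abs_nonneg _) (by linarith) hz
  rw [Real.cos_pi_sub, Real.cos_abs] at hcos
  calc -(‖z‖ * Real.cos θ) = ‖z‖ * -Real.cos θ := by ring
    _ ≤ ‖z‖ * Real.cos z.arg := by gcongr
    _ = z.re := Complex.norm_mul_cos_arg z

lemma closure_truncatedSector_subset {θ r : ℝ} (hθ : 0 ≤ θ) :
    closure {z : ℂ | z ≠ 0 ∧ |z.arg| < π - θ ∧ r < ‖z‖} ⊆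
      {z : ℂ | r ≤ ‖z‖ ∧ -(‖z‖ * Real.cos θ) ≤ z.re} := by
  refine closure_minimal (fun z ⟨_, harg, hr⟩ => ⟨hr.le, ?_⟩) ?_
  · exact Complex.neg_norm_mul_cos_le_re hθ harg.le
  · exact (isClosed_le continuous_const continuous_norm).inter
      (isClosed_le (continuous_norm.mul continuous_const).neg Complex.continuous_re)

lemma Complex.re_sq_mul_tan_sq_le_im_sq {θ : ℝ} (hθ : 0 < Real.cos θ) {z : ℂ}
    (hre : -(‖z‖ * Real.cos θ) ≤ z.re) (hre₀ : z.re ≤ 0) :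
    z.re ^ 2 * Real.tan θ ^ 2 ≤ z.im ^ 2 := by
  have hsq : z.re ^ 2 ≤ (z.re ^ 2 + z.im ^ 2) * Real.cos θ ^ 2 := by
    have : z.re ^ 2 ≤ (‖z‖ * Real.cos θ) ^ 2 := by nlinarith
    rwa [mul_pow, Complex.sq_norm, Complex.normSq_apply, ← sq, ← sq] at this
  rw [Real.tan_eq_sin_div_cos, div_pow, ← mul_div_assoc, div_le_iff₀ (by positivity)]
  nlinarith [Real.sin_sq_add_cos_sq θ]

lemma Complex.im_eq_zero_or_of_sq_add_mul_add_eq_zero {b c : ℝ} {z : ℂ}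
    (hz : z ^ 2 + b * z + c = 0) :
    z.im = 0 ∨ (z.re = -b / 2 ∧ z.im ^ 2 = c - b ^ 2 / 4) := by
  have hre : z.re ^ 2 - z.im ^ 2 + b * z.re + c = 0 := by
    simpa [sq] using congrArg Complex.re hz
  have him : z.im * (2 * z.re + b) = 0 := by
    have := congrArg Complex.im hz
    simp only [sq, Complex.add_im, Complex.mul_im, Complex.ofReal_re, Complex.ofReal_im,
      Complex.zero_im] at this
    linarith
  refine (mul_eq_zero.mp him).imp id fun h => ?_
  have hx : z.re = -b / 2 := by linarith
  exact ⟨hx, by rw [hx] at hre; linarith⟩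

lemma Complex.re_nonpos_of_sq_add_mul_add_eq_zero {b c : ℝ} (hb : 0 ≤ b) (hc : 0 ≤ c) {z : ℂ}
    (hz : z ^ 2 + b * z + c = 0) : z.re ≤ 0 := by
  rcases im_eq_zero_or_of_sq_add_mul_add_eq_zero hz with him | ⟨hre, -⟩
  · have hre := congrArg Complex.re hz
    simp only [sq, Complex.add_re, Complex.mul_re, him, Complex.ofReal_re,
      Complex.ofReal_im, Complex.zero_re] at hre
    nlinarith
  · rw [hre]; linarith

lemma re_nonpos_and_im_sq_le_of_root {a β t : ℝ} (ha : 0 ≤ a) (ht : 0 ≤ t) {z : ℂ}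
    (hz : (z + t) * (z + a + t) + β ^ 2 / 2 * (t ^ 2 + a * t) = 0) :
    z.re ≤ 0 ∧ z.im ^ 2 ≤ β ^ 2 / 2 * z.re ^ 2 := by
  have hquad : z ^ 2 + ((2 * t + a : ℝ) : ℂ) * z + (((1 + β ^ 2 / 2) * (t ^ 2 + a * t) : ℝ) : ℂ)
      = 0 := by
    push_cast; linear_combination hz
  refine ⟨Complex.re_nonpos_of_sq_add_mul_add_eq_zero (by positivity) (by positivity) hquad, ?_⟩
  rcases Complex.im_eq_zero_or_of_sq_add_mul_add_eq_zero hquad with him | ⟨hre, him⟩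
  · rw [him, zero_pow two_ne_zero]; positivity
  · rw [him, hre]
    nlinarith [sq_nonneg β, sq_nonneg a]

/-- For `θ ∈ (θ₀, π/2)` with `tan θ₀ ≥ |β|/√2` and `λ` in the closure of the truncated
sector `Σ_{θ,r}`, there is no `α ∈ ℝ` with
`(λ + α²)(λ + a + α²) + (β²/2)(α⁴ + aα²) = 0`; i.e. no root of the quadratic lies on
the nonpositive real axis. -/
theorem stmt_7 (a β θ₀ θ r : ℝ) (ha : 0 ≤ a) (hr : 0 < r)
    (hθ₀ : 0 < θ₀) (htan : |β| / Real.sqrt 2 ≤ Real.tan θ₀)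
    (hθ : θ ∈ Set.Ioo θ₀ (π / 2))
    (lam : ℂ)
    (hlam : lam ∈ closure {z : ℂ | z ≠ 0 ∧ |z.arg| < π - θ ∧ r < ‖z‖}) :
    ¬ ∃ α : ℝ, (lam + ((α : ℂ)) ^ 2) * (lam + (a : ℂ) + ((α : ℂ)) ^ 2)
        + (β : ℂ) ^ 2 / 2 * (((α : ℂ)) ^ 4 + (a : ℂ) * ((α : ℂ)) ^ 2) = 0 := by
  rintro ⟨α, hα⟩
  obtain ⟨hr_le, hsector⟩ := closure_truncatedSector_subset (hθ₀.trans hθ.1).le hlam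
  have hcos : 0 < cos θ := cos_pos_of_mem_Ioo ⟨by linarith [hθ.1, pi_pos], hθ.2⟩
  have htan_sq : β ^ 2 / 2 < tan θ ^ 2 := by
    have hlt : |β| / √2 < tan θ :=
      htan.trans_lt (tan_lt_tan_of_lt_of_lt_pi_div_two (by linarith [pi_pos]) hθ.2 hθ.1)
    calc β ^ 2 / 2 = (|β| / √2) ^ 2 := by rw [div_pow, sq_abs, sq_sqrt zero_le_two]
      _ < tan θ ^ 2 := by gcongr
  have hroot : (lam + ((α ^ 2 : ℝ) : ℂ)) * (lam + a + ((α ^ 2 : ℝ) : ℂ))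
      + β ^ 2 / 2 * (((α ^ 2 : ℝ) : ℂ) ^ 2 + a * ((α ^ 2 : ℝ) : ℂ)) = 0 := by
    push_cast; linear_combination hα
  obtain ⟨hre, him⟩ := re_nonpos_and_im_sq_le_of_root ha (sq_nonneg α) hroot
  have htan_le := Complex.re_sq_mul_tan_sq_le_im_sq hcos hsector hre
  have hre0 : lam.re = 0 := by
    have : lam.re ^ 2 * (tan θ ^ 2 - β ^ 2 / 2) = 0 := by nlinarith [sq_nonneg lam.re]
    simpa using (mul_eq_zero.mp this).resolve_right (by linarith)
  have hlam0 : lam = 0 := Complex.ext hre0 (by simpa [hre0] using him)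
  rw [hlam0, norm_zero] at hr_le
  exact hr_le.not_gt hr
end

section
/- Let a > 0, β ∈ ℝ, λ ∈ ℂ with λ ∈ Σ_θ for θ ∈ (θ₀, π/2) where tan θ₀ ≥ |β|/√2. Define f(x) = 1/|λ + a + x|² for x ≥ 0. Then (β²|λ|²/2) · sup_{x ≥ 0} f(x) ≤ 1 + β²/2. Equivalently, for all x ≥ 0, β²|λ|² ≤ (2 + β²)|λ + a + x|². -/
/-!
The hypothesis on `β` says exactly `β² ≤ (2 + β²) sin² θ`. The sector condition gives
`|λ| sin θ ≤ |λ + t|` for every `t ≥ 0`: if `Re λ ≥ 0` then shifting to the right only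
increases the modulus, and if `Re λ < 0` then `|Arg λ| ∈ [π/2, π - θ]`, so
`|Im λ| = |λ| |sin Arg λ| ≥ |λ| sin θ`, while `|Im λ| = |Im (λ + t)| ≤ |λ + t|`.
-/

open Real

lemma sin_le_abs_sin_of_pi_div_two_le_abs {θ t : ℝ} (hθ₀ : 0 ≤ θ) (hθ : θ ≤ π / 2)
    (ht : π / 2 ≤ |t|) (htθ : |t| ≤ π - θ) : sin θ ≤ |sin t| := by
  have hsin : sin θ ≤ sin (π - |t|) :=
    sin_le_sin_of_le_of_le_pi_div_two (by linarith) (by linarith) (by linarith)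
  rw [sin_pi_sub] at hsin
  rcases abs_cases t with ⟨h, -⟩ | ⟨h, -⟩ <;> rw [h] at hsin
  · exact hsin.trans (le_abs_self _)
  · exact hsin.trans (by rw [sin_neg]; exact neg_le_abs _)

lemma Complex.norm_mul_sin_le_norm_add_ofReal {θ : ℝ} (hθ₀ : 0 ≤ θ) (hθ : θ ≤ π / 2)
    {z : ℂ} (hz : |z.arg| ≤ π - θ) {t : ℝ} (ht : 0 ≤ t) :
    ‖z‖ * Real.sin θ ≤ ‖z + t‖ := by
  by_cases hre : 0 ≤ z.re
  · calc ‖z‖ * Real.sin θ ≤ ‖z‖ :=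
          mul_le_of_le_one_right (norm_nonneg z) (Real.sin_le_one θ)
      _ ≤ ‖z + t‖ := by
        rw [← sq_le_sq₀ (norm_nonneg _) (norm_nonneg _), Complex.sq_norm, Complex.sq_norm,
          normSq_apply, normSq_apply]
        simp only [add_re, ofReal_re, add_im, ofReal_im, add_zero]
        nlinarith
  · have harg : π / 2 ≤ |z.arg| := by
      by_contra! h
      exact hre (abs_arg_le_pi_div_two_iff.mp h.le)
    calc ‖z‖ * Real.sin θ ≤ ‖z‖ * |Real.sin z.arg| :=
          mul_le_mul_of_nonneg_left (sin_le_abs_sin_of_pi_div_two_le_abs hθ₀ hθ harg hz)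
            (norm_nonneg z)
      _ = |(z + t).im| := by
        rw [← abs_norm, ← abs_mul, norm_mul_sin_arg]; simp
      _ ≤ ‖z + t‖ := abs_im_le_norm _

lemma sq_le_two_add_sq_mul_sin_sq {β θ : ℝ} (hθ₀ : 0 < θ) (hθ : θ < π / 2)
    (htan : |β| / √2 ≤ tan θ) : β ^ 2 ≤ (2 + β ^ 2) * sin θ ^ 2 := by
  have hcos : 0 < cos θ := cos_pos_of_mem_Ioo ⟨by linarith, hθ⟩
  have hβ : |β| * cos θ ≤ √2 * sin θ := by
    rwa [tan_eq_sin_div_cos, div_le_div_iff₀ (by positivity) hcos, mul_comm (sin θ)] at htan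
  have hsq : β ^ 2 * cos θ ^ 2 ≤ 2 * sin θ ^ 2 := by
    have := pow_le_pow_left₀ (by positivity) hβ 2
    rwa [mul_pow, mul_pow, sq_abs, sq_sqrt zero_le_two] at this
  nlinarith [sin_sq_add_cos_sq θ]

/-- For `a > 0`, `λ ∈ Σ_θ` with `θ ∈ (θ₀, π/2)` and `tan θ₀ ≥ |β|/√2`, one has
`β²|λ|² ≤ (2 + β²)|λ + a + x|²` for all `x ≥ 0`; equivalently
`(β²|λ|²/2) sup_{x ≥ 0} 1/|λ+a+x|² ≤ 1 + β²/2`. -/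
theorem stmt_8 (a β θ₀ θ : ℝ) (ha : 0 < a)
    (hθ₀ : 0 < θ₀) (htan : |β| / Real.sqrt 2 ≤ Real.tan θ₀)
    (hθ : θ ∈ Set.Ioo θ₀ (π / 2))
    (lam : ℂ) (hlam : lam ≠ 0 ∧ |lam.arg| < π - θ) :
    ∀ x : ℝ, 0 ≤ x →
      β ^ 2 * ‖lam‖ ^ 2 ≤ (2 + β ^ 2) * ‖lam + (a : ℂ) + (x : ℂ)‖ ^ 2 := by
  intro x hx
  obtain ⟨hθ₀θ, hθπ⟩ := hθ
  have hθpos : 0 < θ := hθ₀.trans hθ₀θ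
  have hβ : β ^ 2 ≤ (2 + β ^ 2) * sin θ ^ 2 :=
    sq_le_two_add_sq_mul_sin_sq hθpos hθπ
      (htan.trans (tan_lt_tan_of_nonneg_of_lt_pi_div_two hθ₀.le hθπ hθ₀θ).le)
  have hdist : ‖lam‖ * sin θ ≤ ‖lam + (a : ℂ) + (x : ℂ)‖ := by
    rw [add_assoc, ← Complex.ofReal_add]
    exact Complex.norm_mul_sin_le_norm_add_ofReal hθpos.le hθπ.le hlam.2.le (by positivity)
  calc β ^ 2 * ‖lam‖ ^ 2 ≤ (2 + β ^ 2) * (‖lam‖ * sin θ) ^ 2 := by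
        rw [mul_pow, ← mul_assoc, mul_right_comm]; gcongr
    _ ≤ (2 + β ^ 2) * ‖lam + (a : ℂ) + (x : ℂ)‖ ^ 2 := by
        gcongr
        exact mul_nonneg (norm_nonneg _) (sin_nonneg_of_nonneg_of_le_pi hθpos.le (by linarith))
end

section
/- Let a ≥ 0, β ∈ ℝ, λ ∈ ℂ with Re λ = −α² − a/2 for some α ∈ ℝ, and suppose (λ + α²)(λ + a + α²) + (β²/2)(α⁴ + aα²) = 0. Then (Im λ)² = (β²/2)(α⁴ + aα²) − a²/4, and consequently (Im λ)²/(Re λ)² ≤ β²/2. -/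
/-- If `Re λ = -α² - a/2` and `(λ + α²)(λ + a + α²) + (β²/2)(α⁴ + aα²) = 0`, then
`(Im λ)² = (β²/2)(α⁴ + aα²) - a²/4`, and consequently `(Im λ)²/(Re λ)² ≤ β²/2`. -/
theorem stmt_9 (a β α : ℝ) (ha : 0 ≤ a) (lam : ℂ)
    (hre : lam.re = -α ^ 2 - a / 2)
    (heq : (lam + ((α : ℂ)) ^ 2) * (lam + (a : ℂ) + ((α : ℂ)) ^ 2)
        + (β : ℂ) ^ 2 / 2 * (((α : ℂ)) ^ 4 + (a : ℂ) * ((α : ℂ)) ^ 2) = 0) :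
    lam.im ^ 2 = β ^ 2 / 2 * (α ^ 4 + a * α ^ 2) - a ^ 2 / 4 ∧
    lam.im ^ 2 / lam.re ^ 2 ≤ β ^ 2 / 2 := by
  have h := congrArg Complex.re heq
  simp [Complex.add_re, Complex.mul_re, Complex.add_im, Complex.mul_im, Complex.div_re,
    Complex.div_im, Complex.normSq, pow_succ, hre] at h
  have him : lam.im ^ 2 = β ^ 2 / 2 * (α ^ 4 + a * α ^ 2) - a ^ 2 / 4 := by
    nlinarith [h]
  refine ⟨him, ?_⟩
  by_cases hz : lam.re = 0
  · have : α ^ 2 = 0 ∧ a = 0 := by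
      constructor <;> nlinarith [sq_nonneg α, hre, hz]
    obtain ⟨h1, h2⟩ := this
    have hα : α = 0 := by nlinarith
    subst hα; subst h2
    simp at him
    simp [him]
    positivity
  · rw [div_le_iff₀ (by positivity)]
    have : lam.re ^ 2 = (α ^ 2 + a / 2) ^ 2 := by rw [hre]; ring
    rw [him, this]
    nlinarith [sq_nonneg β, sq_nonneg a, sq_nonneg (β * a)]
end
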